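/- arXiv:1209.3782 — 2 statements merged into one kernel-verified Lean document; each statement's English description precedes it below -/
import Mathlib

section
/- Let X be a Banach space and let u : [0,∞) → X be continuously differentiable. Then for every σ > 0 one has u(0) = σ^{-1} ∫₀^σ u(τ) dτ − ∫₀^σ t^{-2} ∫₀^t (u(t) − u(τ)) dτ dt, where all integrals are Bochner integrals. -/
/-!
With `F t = ∫₀^t u`, the running average `G t = t⁻¹ F t` tends to `u 0` as `t → 0⁺`, and
`G' t = t⁻¹ u t - t⁻² F t = t⁻² ∫₀^t (u t - u τ) dτ`. Since `u` is Lipschitz on `[0, σ]`,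
`G'` is bounded there, so the fundamental theorem of calculus on `(0, σ)` gives
`∫₀^σ G' = G σ - u 0`, which is the identity.
-/

open MeasureTheory Set Filter Topology
open scoped Interval

section RunningAverage

variable {X : Type*} [NormedAddCommGroup X] [NormedSpace ℝ X]

theorem setIntegral_Ioo_eq_intervalIntegral {f : ℝ → X} {a b : ℝ} (hab : a ≤ b) :
    ∫ x in Ioo a b, f x = ∫ x in a..b, f x := by
  rw [intervalIntegral.integral_of_le hab, integral_Ioc_eq_integral_Ioo]

theorem norm_intervalIntegral_endpoint_sub_le {u : ℝ → X} {K : NNReal} {a b : ℝ} (hab : a ≤ b)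
    (hu : LipschitzOnWith K u (Icc a b)) :
    ‖∫ τ in a..b, (u b - u τ)‖ ≤ K * (b - a) ^ 2 := by
  have hbound : ∀ τ ∈ Ι a b, ‖u b - u τ‖ ≤ K * (b - a) := by
    intro τ hτ
    rw [uIoc_of_le hab] at hτ
    calc ‖u b - u τ‖ ≤ K * ‖b - τ‖ :=
          hu.norm_sub_le ⟨hab, le_rfl⟩ ⟨hτ.1.le, hτ.2⟩
      _ ≤ K * (b - a) := by
          gcongr
          rw [Real.norm_of_nonneg (by linarith [hτ.2])]
          linarith [hτ.1]
  calc ‖∫ τ in a..b, (u b - u τ)‖ ≤ K * (b - a) * |b - a| :=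
        intervalIntegral.norm_integral_le_of_norm_le_const hbound
    _ = K * (b - a) ^ 2 := by rw [abs_of_nonneg (sub_nonneg.2 hab)]; ring

variable [CompleteSpace X]

theorem intervalIntegral_endpoint_sub {u : ℝ → X} {a b : ℝ}
    (hu : IntervalIntegrable u volume a b) :
    ∫ τ in a..b, (u b - u τ) = (b - a) • u b - ∫ τ in a..b, u τ := by
  rw [intervalIntegral.integral_sub intervalIntegrable_const hu, intervalIntegral.integral_const]

-- At `t = 0` this is the junk value `0`; `u 0` is reached only as a limit.
noncomputable def runningAverage (u : ℝ → X) (t : ℝ) : X :=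
  t⁻¹ • ∫ τ in (0 : ℝ)..t, u τ

theorem hasDerivAt_runningAverage {u : ℝ → X} (hu : Continuous u) {t : ℝ} (ht : t ≠ 0) :
    HasDerivAt (runningAverage u) ((t ^ 2)⁻¹ • ∫ τ in (0 : ℝ)..t, (u t - u τ)) t := by
  have hF : HasDerivAt (fun s => ∫ τ in (0 : ℝ)..s, u τ) (u t) t :=
    (hu.integral_hasStrictDerivAt 0 t).hasDerivAt
  refine ((hasDerivAt_inv ht).smul hF).congr_deriv ?_
  rw [intervalIntegral_endpoint_sub (hu.intervalIntegrable 0 t), sub_zero, smul_sub, smul_smul,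
    neg_smul, ← sub_eq_add_neg]
  congr 2
  field_simp

theorem tendsto_runningAverage_nhdsNE_zero {u : ℝ → X} (hu : Continuous u) :
    Tendsto (runningAverage u) (𝓝[≠] 0) (𝓝 (u 0)) := by
  have hslope : slope (fun s => ∫ τ in (0 : ℝ)..s, u τ) 0 = runningAverage u := by
    funext s
    simp [slope_def_module, runningAverage]
  rw [← hslope]
  exact hasDerivAt_iff_tendsto_slope.1 (hu.integral_hasStrictDerivAt 0 0).hasDerivAt

theorem intervalIntegrable_deriv_runningAverage {u : ℝ → X} (hu : ContDiff ℝ 1 u) {σ : ℝ}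
    (hσ : 0 ≤ σ) :
    IntervalIntegrable (fun t => (t ^ 2)⁻¹ • ∫ τ in (0 : ℝ)..t, (u t - u τ)) volume 0 σ := by
  obtain ⟨K, hK⟩ := hu.contDiffOn.exists_lipschitzOnWith one_ne_zero (convex_Icc 0 σ)
    isCompact_Icc
  have hcont : ContinuousOn (fun t => (t ^ 2)⁻¹ • ∫ τ in (0 : ℝ)..t, (u t - u τ)) (Ioc 0 σ) := by
    have hprim :=
      intervalIntegral.continuous_primitive (μ := volume) hu.continuous.intervalIntegrable 0
    refine (ContinuousOn.congr (f := fun t => (t ^ 2)⁻¹ • (t • u t - ∫ τ in (0 : ℝ)..t, u τ))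
      ?_ fun t _ => ?_)
    · exact ((continuousOn_id.pow 2).inv₀ fun t ht => pow_ne_zero 2 ht.1.ne').smul
        ((continuousOn_id.smul hu.continuous.continuousOn).sub hprim.continuousOn)
    · simp only [intervalIntegral_endpoint_sub (hu.continuous.intervalIntegrable 0 t), sub_zero]
  have hbound : ∀ t ∈ Ioc 0 σ, ‖(t ^ 2)⁻¹ • ∫ τ in (0 : ℝ)..t, (u t - u τ)‖ ≤ K := by
    intro t ht
    have hsq : 0 < t ^ 2 := pow_pos ht.1 2
    rw [norm_smul, Real.norm_of_nonneg (inv_nonneg.2 hsq.le), inv_mul_le_iff₀ hsq]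
    simpa [mul_comm] using
      norm_intervalIntegral_endpoint_sub_le ht.1.le (hK.mono (Icc_subset_Icc_right ht.2))
  rw [intervalIntegrable_iff_integrableOn_Ioc_of_le hσ]
  exact (integrableOn_const measure_Ioc_lt_top.ne).mono'
    (hcont.aestronglyMeasurable measurableSet_Ioc)
    ((ae_restrict_iff' measurableSet_Ioc).2 (Eventually.of_forall hbound))

end RunningAverage

/-- The trace identity (3.8): for a continuously differentiable `u : [0,∞) → X`
and every `σ > 0`,
`u(0) = σ⁻¹ ∫₀^σ u(τ) dτ − ∫₀^σ t⁻² ∫₀^t (u(t) − u(τ)) dτ dt`. -/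
theorem trace_identity
    {X : Type*} [NormedAddCommGroup X] [NormedSpace ℝ X] [CompleteSpace X]
    (u : ℝ → X) (hu : ContDiff ℝ 1 u) (σ : ℝ) (hσ : 0 < σ) :
    u 0 = σ⁻¹ • (∫ τ in Ioo (0 : ℝ) σ, u τ)
      - ∫ t in Ioo (0 : ℝ) σ, (t ^ 2)⁻¹ • ∫ τ in Ioo (0 : ℝ) t, (u t - u τ) := by
  have hftc : ∫ t in (0 : ℝ)..σ, (t ^ 2)⁻¹ • ∫ τ in (0 : ℝ)..t, (u t - u τ)
      = runningAverage u σ - u 0 :=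
    intervalIntegral.integral_eq_sub_of_hasDerivAt_of_tendsto hσ
      (fun t ht => hasDerivAt_runningAverage hu.continuous ht.1.ne')
      (intervalIntegrable_deriv_runningAverage hu hσ.le)
      ((tendsto_runningAverage_nhdsNE_zero hu.continuous).mono_left (nhdsGT_le_nhdsNE 0))
      ((hasDerivAt_runningAverage hu.continuous hσ.ne').continuousAt.tendsto.mono_left
        nhdsWithin_le_nhds)
  have hinner : ∀ t ∈ Ioo (0 : ℝ) σ, (t ^ 2)⁻¹ • ∫ τ in Ioo (0 : ℝ) t, (u t - u τ)
      = (t ^ 2)⁻¹ • ∫ τ in (0 : ℝ)..t, (u t - u τ) := fun t ht => by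
    rw [setIntegral_Ioo_eq_intervalIntegral ht.1.le]
  rw [setIntegral_congr_fun measurableSet_Ioo hinner, setIntegral_Ioo_eq_intervalIntegral hσ.le,
    setIntegral_Ioo_eq_intervalIntegral hσ.le, hftc, runningAverage]
  abel
end

section
/- Let H be a Hilbert space, X a Banach space, and a < b real numbers. If φ : (a,b) → γ(H,X) is continuously differentiable with ∫_a^b (s−a)^{1/2} ‖φ'(s)‖_{γ(H,X)} ds < ∞ and φ extends continuously to b, then φ defines an element of γ((a,b); H, X) and ‖φ‖_{γ(a,b;H,X)} ≤ (b−a)^{1/2} ‖φ(b−)‖_{γ(H,X)} + ∫_a^b (s−a)^{1/2} ‖φ'(s)‖_{γ(H,X)} ds. In the case when X is a Hilbert space this reads: ‖φ‖_{L²((a,b);HS(H,X))} ≤ (b−a)^{1/2}‖φ(b−)‖_{HS} + ∫_a^b (s−a)^{1/2}‖φ'(s)‖_{HS} ds, where HS denotes Hilbert–Schmidt operators. -/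
/-!
Since `‖φ s - L‖ ≤ ∫_s^b ‖φ'‖ =: H s`, Minkowski's inequality in `L²(a,b)` gives
`‖φ‖₂ ≤ (b-a)^{1/2} ‖L‖ + ‖H‖₂`. Expanding the square and swapping integrals,
`‖H‖₂² = ∫∫ (min t u - a) ‖φ' t‖ ‖φ' u‖ dt du`, and `min t u - a ≤ √(t-a) √(u-a)` bounds this by
`(∫ √(t-a) ‖φ' t‖ dt)²`.
-/

open MeasureTheory Set Filter

open scoped ENNReal Topology

lemma min_sub_le_sqrt_mul_sqrt (a t u : ℝ) : min t u - a ≤ √(t - a) * √(u - a) := by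
  rcases lt_or_ge (min t u) a with h | h
  · linarith [mul_nonneg (Real.sqrt_nonneg (t - a)) (Real.sqrt_nonneg (u - a))]
  have ht : a ≤ t := h.trans (min_le_left t u)
  have hu : a ≤ u := h.trans (min_le_right t u)
  rw [← Real.sqrt_mul (sub_nonneg.2 ht), Real.le_sqrt (sub_nonneg.2 h) (by nlinarith)]
  nlinarith [min_le_left t u, min_le_right t u]

section Hardy

variable {a b : ℝ}

lemma setLIntegral_indicator_Ioi_mul_le (G : ℝ → ℝ≥0∞) (t u : ℝ) :
    ∫⁻ s in Ioo a b, (Ioi s).indicator G t * (Ioi s).indicator G u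
      ≤ ENNReal.ofReal √(t - a) * G t * (ENNReal.ofReal √(u - a) * G u) := by
  have hind : (fun s => (Ioi s).indicator G t * (Ioi s).indicator G u)
      = (Iio (min t u)).indicator (fun _ => G t * G u) := by
    ext s
    simp only [indicator, mem_Ioi, mem_Iio, lt_min_iff]
    split_ifs <;> simp_all
  calc ∫⁻ s in Ioo a b, (Ioi s).indicator G t * (Ioi s).indicator G u
      = G t * G u * volume (Iio (min t u) ∩ Ioo a b) := by
        rw [hind, lintegral_indicator measurableSet_Iio, setLIntegral_const,
          Measure.restrict_apply measurableSet_Iio]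
    _ ≤ G t * G u * volume (Ioo a (min t u)) := by
        gcongr
        exact fun x hx => ⟨hx.2.1, hx.1⟩
    _ ≤ G t * G u * (ENNReal.ofReal √(t - a) * ENNReal.ofReal √(u - a)) := by
        rw [Real.volume_Ioo, ← ENNReal.ofReal_mul (Real.sqrt_nonneg _)]
        gcongr
        exact min_sub_le_sqrt_mul_sqrt a t u
    _ = _ := by ring

lemma lintegral_sq_setLIntegral_Ioo_le {G : ℝ → ℝ≥0∞} (hG : Measurable G) :
    ∫⁻ s in Ioo a b, (∫⁻ t in Ioo s b, G t) ^ 2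
      ≤ (∫⁻ t in Ioo a b, ENNReal.ofReal √(t - a) * G t) ^ 2 := by
  set μ := volume.restrict (Ioo a b)
  set k : ℝ → ℝ → ℝ≥0∞ := fun s t => (Ioi s).indicator G t
  have hk : Measurable (Function.uncurry k) :=
    (hG.comp measurable_snd).indicator (measurableSet_lt measurable_fst measurable_snd)
  have hkk : Measurable (fun q : ℝ × ℝ × ℝ => k q.1 q.2.1 * k q.1 q.2.2) :=
    (hk.comp (measurable_fst.prodMk measurable_snd.fst)).mul
      (hk.comp (measurable_fst.prodMk measurable_snd.snd))
  have hwG : Measurable (fun t => ENNReal.ofReal √(t - a) * G t) := by fun_prop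
  have hsq : ∀ s ∈ Ioo a b,
      (∫⁻ t in Ioo s b, G t) ^ 2 = ∫⁻ p, k s p.1 * k s p.2 ∂μ.prod μ := by
    intro s hs
    have hks : Measurable (k s) := hk.comp measurable_prodMk_left
    have htail : ∫⁻ t in Ioo s b, G t = ∫⁻ t, k s t ∂μ := by
      rw [lintegral_indicator measurableSet_Ioi, Measure.restrict_restrict measurableSet_Ioi,
        Ioi_inter_Ioo, max_eq_left hs.1.le]
    rw [htail, sq, lintegral_prod_mul hks.aemeasurable hks.aemeasurable]
  calc ∫⁻ s, (∫⁻ t in Ioo s b, G t) ^ 2 ∂μ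
      = ∫⁻ s, ∫⁻ p, k s p.1 * k s p.2 ∂μ.prod μ ∂μ :=
        setLIntegral_congr_fun measurableSet_Ioo hsq
    _ = ∫⁻ p, ∫⁻ s, k s p.1 * k s p.2 ∂μ ∂μ.prod μ := lintegral_lintegral_swap hkk.aemeasurable
    _ ≤ ∫⁻ p, ENNReal.ofReal √(p.1 - a) * G p.1 * (ENNReal.ofReal √(p.2 - a) * G p.2) ∂μ.prod μ :=
        lintegral_mono fun p => setLIntegral_indicator_Ioi_mul_le G p.1 p.2
    _ = _ := by rw [lintegral_prod_mul hwG.aemeasurable hwG.aemeasurable, sq]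

lemma eLpNorm_setLIntegral_Ioo_le {G : ℝ → ℝ≥0∞}
    (hG : AEMeasurable G (volume.restrict (Ioo a b))) :
    eLpNorm (fun s => ∫⁻ t in Ioo s b, G t) 2 (volume.restrict (Ioo a b))
      ≤ ∫⁻ t in Ioo a b, ENNReal.ofReal √(t - a) * G t := by
  have htail : ∀ s ∈ Ioo a b, ∫⁻ t in Ioo s b, G t = ∫⁻ t in Ioo s b, hG.mk G t := fun s hs =>
    lintegral_congr_ae <| ae_restrict_of_ae_restrict_of_subset (Ioo_subset_Ioo_left hs.1.le)
      hG.ae_eq_mk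
  have hweight : ∫⁻ t in Ioo a b, ENNReal.ofReal √(t - a) * G t
      = ∫⁻ t in Ioo a b, ENNReal.ofReal √(t - a) * hG.mk G t :=
    lintegral_congr_ae <| hG.ae_eq_mk.mono fun t ht => congrArg _ ht
  rw [eLpNorm_congr_ae ((ae_restrict_mem measurableSet_Ioo).mono htail), hweight,
    ← ENNReal.pow_le_pow_left_iff two_ne_zero]
  have hsq := eLpNorm_nnreal_pow_eq_lintegral (p := 2) two_ne_zero
    (f := fun s => ∫⁻ t in Ioo s b, hG.mk G t) (μ := volume.restrict (Ioo a b))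
  simp only [NNReal.coe_ofNat, ENNReal.coe_ofNat, enorm_eq_self, ENNReal.rpow_two] at hsq
  exact hsq.trans_le (lintegral_sq_setLIntegral_Ioo_le hG.measurable_mk)

lemma aestronglyMeasurable_of_rpow_sub_mul {p : ℝ} {g : ℝ → ℝ}
    (h : AEStronglyMeasurable (fun t => (t - a) ^ p * g t) (volume.restrict (Ioo a b))) :
    AEStronglyMeasurable g (volume.restrict (Ioo a b)) := by
  have hw : Measurable fun t : ℝ => (t - a) ^ (-p) := by fun_prop
  refine (hw.aestronglyMeasurable.mul h).congr ?_
  filter_upwards [ae_restrict_mem measurableSet_Ioo] with t ht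
  rw [Pi.mul_apply, ← mul_assoc, ← Real.rpow_add (sub_pos.2 ht.1), neg_add_cancel,
    Real.rpow_zero, one_mul]

lemma integrableOn_Ioo_of_rpow_sub_mul {s p : ℝ} {g : ℝ → ℝ} (hp : 0 ≤ p) (has : a < s)
    (h : IntegrableOn (fun t => (t - a) ^ p * g t) (Ioo a b)) : IntegrableOn g (Ioo s b) := by
  have hsub : Ioo s b ⊆ Ioo a b := Ioo_subset_Ioo_left has.le
  refine Integrable.mono' ((h.mono_set hsub).norm.const_mul ((s - a) ^ p)⁻¹)
    ((aestronglyMeasurable_of_rpow_sub_mul h.aestronglyMeasurable).mono_set hsub) ?_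
  filter_upwards [ae_restrict_mem measurableSet_Ioo] with t ht
  have hta : 0 ≤ t - a := by linarith [ht.1]
  rw [norm_mul, Real.norm_of_nonneg (Real.rpow_nonneg hta p), ← mul_assoc]
  refine le_mul_of_one_le_left (norm_nonneg _) ((one_le_inv_mul₀ ?_).2 ?_)
  · exact Real.rpow_pos_of_pos (sub_pos.2 has) p
  · exact Real.rpow_le_rpow (sub_pos.2 has).le (by linarith [ht.1]) hp

lemma eLpNorm_setLIntegral_Ioo_enorm_le_ofReal {F : Type*} [NormedAddCommGroup F] {g : ℝ → F}
    (hint : IntegrableOn (fun s => (s - a) ^ (1/2 : ℝ) * ‖g s‖) (Ioo a b)) :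
    eLpNorm (fun s => ∫⁻ t in Ioo s b, ‖g t‖ₑ) 2 (volume.restrict (Ioo a b))
      ≤ ENNReal.ofReal (∫ s in Ioo a b, (s - a) ^ (1/2 : ℝ) * ‖g s‖) := by
  have hG : AEMeasurable (fun t => ‖g t‖ₑ) (volume.restrict (Ioo a b)) := by
    simpa only [enorm_norm] using
      (aestronglyMeasurable_of_rpow_sub_mul hint.aestronglyMeasurable).enorm
  refine (eLpNorm_setLIntegral_Ioo_le hG).trans_eq ?_
  rw [ofReal_integral_eq_lintegral_ofReal hint ((ae_restrict_mem measurableSet_Ioo).mono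
    fun t ht => mul_nonneg (Real.rpow_nonneg (sub_pos.2 ht.1).le _) (norm_nonneg _))]
  refine setLIntegral_congr_fun measurableSet_Ioo fun t ht => ?_
  rw [ENNReal.ofReal_mul (Real.rpow_nonneg (sub_pos.2 ht.1).le _), ofReal_norm,
    Real.sqrt_eq_rpow]

end Hardy

section Displacement

variable {E : Type*} [NormedAddCommGroup E] [NormedSpace ℝ E] {f f' : ℝ → E} {s b : ℝ} {L : E}

lemma norm_sub_le_setIntegral_Ioo_of_tendsto (hsb : s < b)
    (hderiv : ∀ t ∈ Ico s b, HasDerivAt f (f' t) t) (hlim : Tendsto f (𝓝[<] b) (𝓝 L))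
    (hint : IntegrableOn (fun t => ‖f' t‖) (Ioo s b)) :
    ‖L - f s‖ ≤ ∫ t in Ioo s b, ‖f' t‖ := by
  have hdisp : ∀ r ∈ Ioo s b, ‖f r - f s‖ ≤ ∫ t in Ioo s b, ‖f' t‖ := by
    intro r hr
    have hsr : Icc s r ⊆ Ico s b := Icc_subset_Ico_right hr.2
    have hsr' : Ioo s r ⊆ Ico s b := Ioo_subset_Icc_self.trans hsr
    calc ‖f r - f s‖ ≤ ∫ t in s..r, ‖f' t‖ := by
          refine norm_sub_le_integral_of_norm_deriv_le_of_le hr.1.le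
            (fun t ht => (hderiv t (hsr ht)).continuousAt.continuousWithinAt)
            (fun t ht => (hderiv t (hsr' ht)).differentiableAt.differentiableWithinAt)
            (.of_forall fun t ht => by rw [(hderiv t (hsr' ht)).deriv])
            ((intervalIntegrable_iff_integrableOn_Ioo_of_le hr.1.le).2
              (hint.mono_set (Ioo_subset_Ioo_right hr.2.le)))
      _ = ∫ t in Ioo s r, ‖f' t‖ := by
          rw [intervalIntegral.integral_of_le hr.1.le, integral_Ioc_eq_integral_Ioo]
      _ ≤ ∫ t in Ioo s b, ‖f' t‖ :=
          setIntegral_mono_set hint (.of_forall fun t => norm_nonneg _)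
            (Ioo_subset_Ioo_right hr.2.le).eventuallyLE
  exact le_of_tendsto (hlim.sub_const (f s)).norm (mem_of_superset (Ioo_mem_nhdsLT hsb) hdisp)

lemma enorm_le_enorm_add_setLIntegral_Ioo_of_tendsto (hsb : s < b)
    (hderiv : ∀ t ∈ Ico s b, HasDerivAt f (f' t) t) (hlim : Tendsto f (𝓝[<] b) (𝓝 L))
    (hint : IntegrableOn (fun t => ‖f' t‖) (Ioo s b)) :
    ‖f s‖ₑ ≤ ‖L‖ₑ + ∫⁻ t in Ioo s b, ‖f' t‖ₑ := by
  calc ‖f s‖ₑ = ‖L - (L - f s)‖ₑ := by rw [sub_sub_cancel]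
    _ ≤ ‖L‖ₑ + ENNReal.ofReal ‖L - f s‖ := by rw [ofReal_norm]; exact enorm_sub_le
    _ ≤ ‖L‖ₑ + ENNReal.ofReal (∫ t in Ioo s b, ‖f' t‖) := by
        gcongr
        exact norm_sub_le_setIntegral_Ioo_of_tendsto hsb hderiv hlim hint
    _ = ‖L‖ₑ + ∫⁻ t in Ioo s b, ‖f' t‖ₑ := by
        rw [ofReal_integral_eq_lintegral_ofReal hint (.of_forall fun _ => norm_nonneg _)]
        simp only [ofReal_norm]

end Displacement

lemma eLpNorm_le_mul_add_of_enorm_le_add {α ε : Type*} [MeasurableSpace α] {μ : Measure α}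
    [TopologicalSpace ε] [ENorm ε] {p : ℝ≥0∞} (hp1 : 1 ≤ p) (hp : p ≠ ∞)
    {f : α → ε} {c : ℝ≥0∞} {H : α → ℝ≥0∞} (hH : AEMeasurable H μ)
    (h : ∀ᵐ x ∂μ, ‖f x‖ₑ ≤ c + H x) :
    eLpNorm f p μ ≤ c * μ univ ^ (1 / p.toReal) + eLpNorm H p μ :=
  calc eLpNorm f p μ ≤ eLpNorm ((fun _ => c) + H) p μ := eLpNorm_mono_enorm_ae h
    _ ≤ eLpNorm (fun _ => c) p μ + eLpNorm H p μ :=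
        eLpNorm_add_le aestronglyMeasurable_const hH.aestronglyMeasurable hp1
    _ = _ := by rw [eLpNorm_const' c (zero_lt_one.trans_le hp1).ne' hp, enorm_eq_self]

theorem gamma_norm_bound_via_derivative_general
    {E : Type*} [NormedAddCommGroup E] [InnerProductSpace ℝ E]
    (a b : ℝ) (hab : a < b) (φ φ' : ℝ → E) (L : E)
    (hderiv : ∀ s ∈ Ioo a b, HasDerivAt φ (φ' s) s)
    (hlim : Tendsto φ (nhdsWithin b (Iio b)) (nhds L))
    (hint : IntegrableOn (fun s => (s - a) ^ (1/2 : ℝ) * ‖φ' s‖) (Ioo a b)) :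
    MemLp φ 2 (volume.restrict (Ioo a b)) ∧
      (∫ s in Ioo a b, ‖φ s‖ ^ 2) ^ (1/2 : ℝ)
        ≤ (b - a) ^ (1/2 : ℝ) * ‖L‖
          + ∫ s in Ioo a b, (s - a) ^ (1/2 : ℝ) * ‖φ' s‖ := by
  set μ := volume.restrict (Ioo a b)
  set I := ∫ s in Ioo a b, (s - a) ^ (1/2 : ℝ) * ‖φ' s‖
  have hI : 0 ≤ I := setIntegral_nonneg measurableSet_Ioo fun t ht =>
    mul_nonneg (Real.rpow_nonneg (sub_pos.2 ht.1).le _) (norm_nonneg _)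
  set H : ℝ → ℝ≥0∞ := fun s => ∫⁻ t in Ioo s b, ‖φ' t‖ₑ
  have hpt : ∀ s ∈ Ioo a b, ‖φ s‖ₑ ≤ ‖L‖ₑ + H s := fun s hs =>
    enorm_le_enorm_add_setLIntegral_Ioo_of_tendsto hs.2
      (fun t ht => hderiv t ⟨hs.1.trans_le ht.1, ht.2⟩) hlim
      (integrableOn_Ioo_of_rpow_sub_mul (by norm_num) hs.1 hint)
  have hH : Measurable H :=
    Antitone.measurable fun s s' h => lintegral_mono_set (Ioo_subset_Ioo_left h)
  have hbound : eLpNorm φ 2 μ ≤ ENNReal.ofReal ((b - a) ^ (1/2 : ℝ) * ‖L‖ + I) := by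
    have hconst : ‖L‖ₑ * μ univ ^ (1 / (2 : ℝ≥0∞).toReal)
        = ENNReal.ofReal ((b - a) ^ (1/2 : ℝ) * ‖L‖) := by
      rw [Measure.restrict_apply_univ, Real.volume_Ioo, ENNReal.toReal_ofNat,
        ENNReal.ofReal_rpow_of_nonneg (sub_pos.2 hab).le (by norm_num),
        ENNReal.ofReal_mul (by positivity), ofReal_norm, mul_comm]
    calc eLpNorm φ 2 μ
        ≤ ‖L‖ₑ * μ univ ^ (1 / (2 : ℝ≥0∞).toReal) + eLpNorm H 2 μ :=
          eLpNorm_le_mul_add_of_enorm_le_add one_le_two ENNReal.ofNat_ne_top hH.aemeasurable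
            ((ae_restrict_mem measurableSet_Ioo).mono hpt)
      _ ≤ ENNReal.ofReal ((b - a) ^ (1/2 : ℝ) * ‖L‖) + ENNReal.ofReal I :=
          add_le_add hconst.le (eLpNorm_setLIntegral_Ioo_enorm_le_ofReal hint)
      _ = _ := (ENNReal.ofReal_add (by positivity) hI).symm
  have hφ : AEStronglyMeasurable φ μ :=
    ContinuousOn.aestronglyMeasurable (fun s hs => (hderiv s hs).continuousAt.continuousWithinAt)
      measurableSet_Ioo
  refine ⟨⟨hφ, hbound.trans_lt ENNReal.ofReal_lt_top⟩, ?_⟩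
  calc (∫ s in Ioo a b, ‖φ s‖ ^ 2) ^ (1/2 : ℝ) = (eLpNorm φ 2 μ).toReal := by
        rw [toReal_eLpNorm hφ, lpNorm_eq_integral_norm_rpow_toReal two_ne_zero
          ENNReal.ofNat_ne_top hφ]
        norm_num
        rfl
    _ ≤ _ := ENNReal.toReal_le_of_le_ofReal (by positivity) hbound

/-- Proposition 2.4 in the Hilbert-space specialization, where `γ(H,X)` is the space of
Hilbert–Schmidt operators (a Hilbert space `E`) and `γ(a,b;H,X) = L²((a,b);HS(H,X))`:
if `φ : (a,b) → E` is continuously differentiable with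
`∫_a^b (s−a)^{1/2} ‖φ'(s)‖ ds < ∞` and `φ` extends continuously to `b` with limit
`φ(b−) = L`, then `φ ∈ L²((a,b);E)` and
`‖φ‖_{L²((a,b);E)} ≤ (b−a)^{1/2} ‖φ(b−)‖ + ∫_a^b (s−a)^{1/2} ‖φ'(s)‖ ds`. -/
theorem gamma_norm_bound_via_derivative
    {E : Type*} [NormedAddCommGroup E] [InnerProductSpace ℝ E] [CompleteSpace E]
    (a b : ℝ) (hab : a < b) (φ φ' : ℝ → E) (L : E)
    (hderiv : ∀ s ∈ Ioo a b, HasDerivAt φ (φ' s) s)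
    (hcont : ContinuousOn φ' (Ioo a b))
    (hlim : Tendsto φ (nhdsWithin b (Iio b)) (nhds L))
    (hint : IntegrableOn (fun s => (s - a) ^ (1/2 : ℝ) * ‖φ' s‖) (Ioo a b)) :
    MemLp φ 2 (volume.restrict (Ioo a b)) ∧
      (∫ s in Ioo a b, ‖φ s‖ ^ 2) ^ (1/2 : ℝ)
        ≤ (b - a) ^ (1/2 : ℝ) * ‖L‖
          + ∫ s in Ioo a b, (s - a) ^ (1/2 : ℝ) * ‖φ' s‖ :=
  gamma_norm_bound_via_derivative_general a b hab φ φ' L hderiv hlim hint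
end
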